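/- The canonical projection π̂ : D_H → H* defined by π̂(f ⊗ x) = ε(f) x is a bialgebra homomorphism onto (H*)^cop: π̂ is a unital algebra homomorphism from the tensor product algebra D_H = H ⊗ H* to the convolution algebra H*, and it satisfies (π̂ ⊗ π̂) ∘ Δ_D = Δ̂ ∘ π̂ and ε̂ ∘ π̂ = ε_D, where ε̂(x) = x(1). -/

import Mathlib

open scoped TensorProduct

noncomputable section

variable (k H : Type*) [Field k] [Ring H] [HopfAlgebra k H]

/-- The convolution product on the linear dual `H*` of `H`, as a linear map
`H* ⊗ H* → H*`: it sends `x ⊗ y` to `a ↦ x(a_(1)) y(a_(2))`. -/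
def convL : Module.Dual k H ⊗[k] Module.Dual k H →ₗ[k] Module.Dual k H :=
  LinearMap.lcomp k k (Coalgebra.comul (R := k) (A := H)) ∘ₗ
    TensorProduct.dualDistrib k H H

/-- The multiplication of the tensor product algebra `D_H = H ⊗ H*`, where `H*` carries
the convolution product: `(f ⊗ x)(g ⊗ y) = fg ⊗ (x · y)`. -/
def mulD : (H ⊗[k] Module.Dual k H) ⊗[k] (H ⊗[k] Module.Dual k H) →ₗ[k]
    H ⊗[k] Module.Dual k H :=
  TensorProduct.map (LinearMap.mul' k H) (convL k H) ∘ₗ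
    (TensorProduct.tensorTensorTensorComm k H (Module.Dual k H) H
      (Module.Dual k H)).toLinearMap

/-- The unit `1 ⊗ ε` of the tensor product algebra `D_H = H ⊗ H*`. -/
def oneD : H ⊗[k] Module.Dual k H :=
  (1 : H) ⊗ₜ[k] (Coalgebra.counit (R := k) (A := H))

/-- The counit `ε_D(f ⊗ x) = ε(f) x(1)` of the Drinfeld codouble `D_H = H ⊗ H*`. -/
def epsD : H ⊗[k] Module.Dual k H →ₗ[k] k :=
  LinearMap.mul' k k ∘ₗ
    TensorProduct.map (Coalgebra.counit (R := k) (A := H))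
      (LinearMap.applyₗ (1 : H) : Module.Dual k H →ₗ[k] k)

variable {k H}

/-- The element `w = Σ_j e_j ⊗ e^j ∈ H ⊗ H*`. -/
def wElem {n : ℕ} (b : Module.Basis (Fin n) k H) : H ⊗[k] Module.Dual k H :=
  ∑ j : Fin n, b j ⊗ₜ[k] b.coord j

/-- The element `w⁻¹ = (S ⊗ id)(w) = Σ_j S(e_j) ⊗ e^j ∈ H ⊗ H*`. -/
def wElemInv {n : ℕ} (b : Module.Basis (Fin n) k H) : H ⊗[k] Module.Dual k H :=
  ∑ j : Fin n, HopfAlgebra.antipode (R := k) (b j) ⊗ₜ[k] b.coord j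

/-- Conjugation `Ad(w)(z) = w z w⁻¹` by `w` in the tensor product algebra `H ⊗ H*`. -/
def adW {n : ℕ} (b : Module.Basis (Fin n) k H) :
    H ⊗[k] Module.Dual k H →ₗ[k] H ⊗[k] Module.Dual k H :=
  mulD k H ∘ₗ
    TensorProduct.mk k (H ⊗[k] Module.Dual k H) (H ⊗[k] Module.Dual k H) (wElem b) ∘ₗ
    mulD k H ∘ₗ
    (TensorProduct.mk k (H ⊗[k] Module.Dual k H) (H ⊗[k] Module.Dual k H)).flip
      (wElemInv b)

/-- The comultiplication `Δ_D = (id ⊗ σ ⊗ id) ∘ (id ⊗ Ad(w) ⊗ id) ∘ (Δ ⊗ Δ̂)` of the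
Drinfeld codouble `D_H = H ⊗ H*`, where `Δ̂` is the comultiplication of `(H*)^cop` and
`σ` is the flip map. -/
def deltaD {n : ℕ} (b : Module.Basis (Fin n) k H)
    (Δhat : Module.Dual k H →ₗ[k] Module.Dual k H ⊗[k] Module.Dual k H) :
    H ⊗[k] Module.Dual k H →ₗ[k]
      (H ⊗[k] Module.Dual k H) ⊗[k] (H ⊗[k] Module.Dual k H) :=
  (TensorProduct.assoc k H (Module.Dual k H) (H ⊗[k] Module.Dual k H)).symm.toLinearMap ∘ₗ
    TensorProduct.map (LinearMap.id : H →ₗ[k] H)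
      (TensorProduct.assoc k (Module.Dual k H) H (Module.Dual k H)).toLinearMap ∘ₗ
    TensorProduct.map (LinearMap.id : H →ₗ[k] H)
      (TensorProduct.map (TensorProduct.comm k H (Module.Dual k H)).toLinearMap
        (LinearMap.id : Module.Dual k H →ₗ[k] Module.Dual k H)) ∘ₗ
    TensorProduct.map (LinearMap.id : H →ₗ[k] H)
      (TensorProduct.map (adW b)
        (LinearMap.id : Module.Dual k H →ₗ[k] Module.Dual k H)) ∘ₗ
    TensorProduct.map (LinearMap.id : H →ₗ[k] H)
      (TensorProduct.assoc k H (Module.Dual k H) (Module.Dual k H)).symm.toLinearMap ∘ₗ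
    (TensorProduct.assoc k H H (Module.Dual k H ⊗[k] Module.Dual k H)).toLinearMap ∘ₗ
    TensorProduct.map (Coalgebra.comul (R := k) (A := H)) Δhat

variable (k H)

/-- The canonical projection `π̂ : D_H → H*`, `π̂(f ⊗ x) = ε(f) x`. -/
def piHatD : H ⊗[k] Module.Dual k H →ₗ[k] Module.Dual k H :=
  (TensorProduct.lid k (Module.Dual k H)).toLinearMap ∘ₗ
    TensorProduct.map (Coalgebra.counit (R := k) (A := H))
      (LinearMap.id : Module.Dual k H →ₗ[k] Module.Dual k H)

/-!
Write `π̂ = ε ⊗ id`. Since `ε` is multiplicative and is the unit of the convolution algebra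
`H*`, `π̂` is a unital algebra map. Moreover `π̂(w) = π̂(w⁻¹) = ε` (as `ε ∘ S = ε`), so
`π̂ ∘ Ad(w) = π̂`, and the Hopf-algebra legs of `Δ_D(f ⊗ x)` contribute only
`ε(f₍₁₎) ε(f₍₂₎) = ε(f)`: hence `(π̂ ⊗ π̂)(Δ_D(f ⊗ x)) = ε(f) Δ̂(x) = Δ̂(π̂(f ⊗ x))`.
-/

open TensorProduct WithConv

lemma mul'_map_counit_comul {R C : Type*} [CommSemiring R] [AddCommMonoid C] [Module R C]
    [Coalgebra R C] (c : C) :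
    LinearMap.mul' R R (map Coalgebra.counit Coalgebra.counit (Coalgebra.comul c)) =
      Coalgebra.counit (R := R) c := by
  have h : ((1 : WithConv (C →ₗ[R] R)) * 1) c = (1 : WithConv (C →ₗ[R] R)) c := by rw [mul_one]
  exact h

section

variable {k H : Type*} [Field k] [Ring H] [HopfAlgebra k H]

lemma convL_tmul (x y : Module.Dual k H) :
    convL k H (x ⊗ₜ y) = (toConv x * toConv y).ofConv := by
  ext a
  simp only [convL, LinearMap.comp_apply, LinearMap.lcomp_apply, LinearMap.convMul_apply]
  have h : dualDistrib k H H (x ⊗ₜ y) = LinearMap.mul' k k ∘ₗ map x y :=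
    TensorProduct.ext' fun _ _ => rfl
  rw [h, LinearMap.comp_apply]

lemma toConv_counit : toConv (Coalgebra.counit (R := k) (A := H)) = 1 := by
  rw [LinearMap.convOne_def, Algebra.linearMap_self, LinearMap.id_comp]

lemma convL_counit_tmul (x : Module.Dual k H) :
    convL k H (Coalgebra.counit ⊗ₜ x) = x := by
  rw [convL_tmul, toConv_counit, one_mul]

lemma convL_tmul_counit (x : Module.Dual k H) :
    convL k H (x ⊗ₜ Coalgebra.counit) = x := by
  rw [convL_tmul, toConv_counit, mul_one]

lemma piHatD_tmul (f : H) (x : Module.Dual k H) :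
    piHatD k H (f ⊗ₜ x) = Coalgebra.counit (R := k) f • x := by
  simp [piHatD]

lemma piHatD_sum_tmul_coord {n : ℕ} (b : Module.Basis (Fin n) k H) (φ : H →ₗ[k] H) :
    piHatD k H (∑ j, φ (b j) ⊗ₜ b.coord j) = Coalgebra.counit ∘ₗ φ := by
  refine b.ext fun i => ?_
  simp [piHatD_tmul, map_sum, Finsupp.single_apply]

lemma piHatD_wElem {n : ℕ} (b : Module.Basis (Fin n) k H) :
    piHatD k H (wElem b) = Coalgebra.counit :=
  piHatD_sum_tmul_coord b .id

lemma piHatD_wElemInv {n : ℕ} (b : Module.Basis (Fin n) k H) :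
    piHatD k H (wElemInv b) = Coalgebra.counit :=
  (piHatD_sum_tmul_coord b (HopfAlgebra.antipode k)).trans HopfAlgebra.counit_comp_antipode

lemma mulD_tmul (f g : H) (x y : Module.Dual k H) :
    mulD k H ((f ⊗ₜ x) ⊗ₜ (g ⊗ₜ y)) = (f * g) ⊗ₜ convL k H (x ⊗ₜ y) := by
  simp [mulD]

lemma piHatD_comp_mulD :
    piHatD k H ∘ₗ mulD k H = convL k H ∘ₗ map (piHatD k H) (piHatD k H) := by
  ext f x g y
  simp [mulD_tmul, piHatD_tmul, Bialgebra.counit_mul, ← smul_tmul', mul_assoc,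
    mul_left_comm]

lemma piHatD_mulD (z z' : H ⊗[k] Module.Dual k H) :
    piHatD k H (mulD k H (z ⊗ₜ z')) = convL k H (piHatD k H z ⊗ₜ piHatD k H z') :=
  congr($piHatD_comp_mulD (z ⊗ₜ z'))

lemma piHatD_adW {n : ℕ} (b : Module.Basis (Fin n) k H) (z : H ⊗[k] Module.Dual k H) :
    piHatD k H (adW b z) = piHatD k H z := by
  change piHatD k H (mulD k H (wElem b ⊗ₜ mulD k H (z ⊗ₜ wElemInv b))) = _
  rw [piHatD_mulD, piHatD_mulD, piHatD_wElem, piHatD_wElemInv, convL_tmul_counit,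
    convL_counit_tmul]

lemma map_piHatD_reassoc_tmul (f : H) (u : H ⊗[k] Module.Dual k H) (y : Module.Dual k H) :
    map (piHatD k H) (piHatD k H) ((TensorProduct.assoc k H _ _).symm
        (f ⊗ₜ TensorProduct.assoc k _ H _ (TensorProduct.comm k H _ u ⊗ₜ y))) =
      Coalgebra.counit (R := k) f • (piHatD k H u ⊗ₜ y) := by
  induction u using TensorProduct.induction_on with
  | zero => simp
  | tmul g x => simp [piHatD_tmul, smul_tmul', smul_smul, mul_comm]
  | add u v hu hv => simp only [map_add, add_tmul, tmul_add, hu, hv, smul_add]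

lemma map_piHatD_comp_deltaD {n : ℕ} (b : Module.Basis (Fin n) k H)
    (Δhat : Module.Dual k H →ₗ[k] Module.Dual k H ⊗[k] Module.Dual k H) :
    map (piHatD k H) (piHatD k H) ∘ₗ deltaD b Δhat = Δhat ∘ₗ piHatD k H := by
  have hchain : map (piHatD k H) (piHatD k H) ∘ₗ deltaD b Δhat =
      (TensorProduct.lid k _).toLinearMap ∘ₗ
        map (LinearMap.mul' k k ∘ₗ map Coalgebra.counit Coalgebra.counit) .id ∘ₗ
        map Coalgebra.comul Δhat := by
    simp only [deltaD, ← LinearMap.comp_assoc]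
    congr 1
    ext f g x y
    simp [map_piHatD_reassoc_tmul, piHatD_adW, piHatD_tmul, smul_tmul', smul_smul]
  rw [hchain]
  ext f x
  simp [mul'_map_counit_comul, piHatD_tmul]

lemma piHatD_apply_one (z : H ⊗[k] Module.Dual k H) : piHatD k H z 1 = epsD k H z := by
  induction z using TensorProduct.induction_on with
  | zero => simp
  | tmul f x => simp [piHatD_tmul, epsD]
  | add u v hu hv => simp [hu, hv]

end

theorem drinfeld_codouble_projection_second_factor_general
    {k H : Type*} [Field k] [Ring H] [HopfAlgebra k H] {n : ℕ} (b : Module.Basis (Fin n) k H)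
    (Δhat : Module.Dual k H →ₗ[k] Module.Dual k H ⊗[k] Module.Dual k H) :
    (∀ z z' : H ⊗[k] Module.Dual k H,
      piHatD k H (mulD k H (z ⊗ₜ[k] z'))
        = convL k H (piHatD k H z ⊗ₜ[k] piHatD k H z')) ∧
    (piHatD k H (oneD k H) = Coalgebra.counit (R := k) (A := H)) ∧
    (TensorProduct.map (piHatD k H) (piHatD k H) ∘ₗ deltaD b Δhat
      = Δhat ∘ₗ piHatD k H) ∧
    (∀ z : H ⊗[k] Module.Dual k H, piHatD k H z (1 : H) = epsD k H z) := by
  refine ⟨piHatD_mulD, ?_, map_piHatD_comp_deltaD b Δhat, piHatD_apply_one⟩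
  rw [oneD, piHatD_tmul, Bialgebra.counit_one, one_smul]

/-- The canonical projection `π̂ : D_H → H*`, `π̂(f ⊗ x) = ε(f) x`, is a
bialgebra homomorphism onto `(H*)^cop`: it is a unital algebra homomorphism from the
tensor product algebra `D_H = H ⊗ H*` to the convolution algebra `H*` (whose unit is `ε`)
and satisfies `(π̂ ⊗ π̂) ∘ Δ_D = Δ̂ ∘ π̂` and `ε̂ ∘ π̂ = ε_D`, where `ε̂(x) = x(1)`.
Here `Δ̂` is the comultiplication of `(H*)^cop`, characterized by `Δ̂(x)(a ⊗ b) = x(ba)`. -/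
theorem drinfeld_codouble_projection_second_factor
    {k H : Type*} [Field k] [Ring H] [HopfAlgebra k H] {n : ℕ} (b : Module.Basis (Fin n) k H)
    (Δhat : Module.Dual k H →ₗ[k] Module.Dual k H ⊗[k] Module.Dual k H)
    (hΔhat : ∀ (x : Module.Dual k H) (a c : H),
      TensorProduct.dualDistrib k H H (Δhat x) (a ⊗ₜ[k] c) = x (c * a)) :
    (∀ z z' : H ⊗[k] Module.Dual k H,
      piHatD k H (mulD k H (z ⊗ₜ[k] z'))
        = convL k H (piHatD k H z ⊗ₜ[k] piHatD k H z')) ∧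
    (piHatD k H (oneD k H) = Coalgebra.counit (R := k) (A := H)) ∧
    (TensorProduct.map (piHatD k H) (piHatD k H) ∘ₗ deltaD b Δhat
      = Δhat ∘ₗ piHatD k H) ∧
    (∀ z : H ⊗[k] Module.Dual k H, piHatD k H z (1 : H) = epsD k H z) :=
  drinfeld_codouble_projection_second_factor_general b Δhat
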